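/- Let A be a uniform algebra on a compact Hausdorff space X and let φ₁, …, φₙ be distinct characters of A, none of which is evaluation at a point of X, and fix x ∈ X which is not an isolated point of X. Assume there exists u ∈ A with |u| ≡ 1 on X and φⱼ(u) = 0 for all j, and assume A is pervasive. Then the closed subalgebra A_n = {f ∈ A : φⱼ(f) = f(x) for j = 1, …, n} is pervasive on X: for every closed F with ∅ ≠ F ⊊ X, the restrictions of A_n to F are dense in C(F). -/

import Mathlib

variable {X : Type} [TopologicalSpace X] [CompactSpace X] [T2Space X]

/-- A uniform algebra `A` on `X` is pervasive if for every nonempty proper closed subset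
`F` of `X`, the restrictions of elements of `A` to `F` are dense in `C(F, ℂ)`. -/
def Pervasive (A : Subalgebra ℂ C(X, ℂ)) : Prop :=
  ∀ F : Set X, IsClosed F → F.Nonempty → F ≠ Set.univ →
    Dense ((fun f : C(X, ℂ) => f.restrict F) '' (A : Set C(X, ℂ)))

/-!
For `k, h ∈ A` the function `G = k(x) + (k - k(x)) h u` lies in `Aₙ`: `φⱼ(u) = 0` gives
`φⱼ(G) = k(x) = G(x)`. On `F` the map `p ↦ k(x) + (k - k(x)) p u` is continuous and sends
`ū` to `k` because `|u| = 1`; since `ū|_F` is a limit of restrictions of elements of `A`,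
`k|_F` is a limit of restrictions of elements of `Aₙ`. So `A|_F` lies in the closure of
`Aₙ|_F`, and pervasiveness of `A` makes the latter dense.
-/

theorem ContinuousMap.mem_closure_image_const_add_mul_unimodular {Y : Type*}
    [TopologicalSpace Y] [LocallyCompactSpace Y] {S : Set C(Y, ℂ)} {u : C(Y, ℂ)}
    (hu : ∀ y, ‖u y‖ = 1) (hS : star u ∈ closure S) (p : C(Y, ℂ)) (c : ℂ) :
    p ∈ closure ((fun h => algebraMap ℂ _ c + (p - algebraMap ℂ _ c) * h * u) '' S) := by
  have hp : p = algebraMap ℂ _ c + (p - algebraMap ℂ _ c) * star u * u := by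
    ext y
    have hunit : starRingEnd ℂ (u y) * u y = 1 := by
      rw [Complex.conj_mul', hu y]; norm_num
    simp [mul_assoc, hunit]
  have hcont : Continuous fun h : C(Y, ℂ) =>
      algebraMap ℂ _ c + (p - algebraMap ℂ _ c) * h * u := by
    fun_prop
  convert map_mem_closure hcont hS (Set.mapsTo_image _ S) using 1

theorem AlgHom.apply_algebraMap_add_mul_eq {R B : Type*} [CommSemiring R] [Semiring B]
    [Algebra R B] (ψ : B →ₐ[R] R) {u : B} (hu : ψ u = 0) (c : R) (a : B) :
    ψ (algebraMap R B c + a * u) = c := by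
  simp [hu]

theorem stmt_15 (A : Subalgebra ℂ C(X, ℂ))
    (hperv : Pervasive A)
    (n : ℕ) (φ : Fin n → (A →ₐ[ℂ] ℂ))
    (x : X)
    (u : A) (humod : ∀ y : X, ‖(u : C(X, ℂ)) y‖ = 1)
    (huφ : ∀ j : Fin n, φ j u = 0) :
    ∀ F : Set X, IsClosed F → F.Nonempty → F ≠ Set.univ →
      Dense ((fun f : C(X, ℂ) => f.restrict F) ''
        {f : C(X, ℂ) | ∃ hf : f ∈ A, ∀ j : Fin n, φ j ⟨f, hf⟩ = f x}) := by
  intro F hF hFne hFproper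
  have : CompactSpace F := isCompact_iff_compactSpace.mp hF.isCompact
  have hdense := hperv F hF hFne hFproper
  refine (hdense.mono ?_).of_closure
  rintro _ ⟨k, hk, rfl⟩
  refine closure_mono ?_ <| ContinuousMap.mem_closure_image_const_add_mul_unimodular
    (u := (u : C(X, ℂ)).restrict F) (fun y => humod y) (hdense _) (k.restrict F) (k x)
  rintro _ ⟨_, ⟨h, hh, rfl⟩, rfl⟩
  let G : A := algebraMap ℂ A (k x) + (⟨k, hk⟩ - algebraMap ℂ A (k x)) * ⟨h, hh⟩ * u
  refine ⟨G, ⟨G.2, fun j => ?_⟩, ?_⟩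
  · have hGx : (G : C(X, ℂ)) x = k x := by simp [G]
    exact hGx ▸ (φ j).apply_algebraMap_add_mul_eq (huφ j) _ _
  · ext y
    simp [G]
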